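/- arXiv:1807.04209 — 2 statements merged into one kernel-verified Lean document; each statement's English description precedes it below -/
import Mathlib

section
/- Let ε, δ be reals with 0 < ε ≤ 0.5 and 0 < δ ≤ 0.1, and let k ≥ 10 be an integer. Set ε₀ := 2ε/√(10·k·log(1/δ)). Then ε₀·√(2·k·log(1/δ)) + k·ε₀·(e^{ε₀} − 1) ≤ ε. -/
/-!
The first term does not depend on `k` or `δ`: since `√(10a) = √5 · √(2a)`, it equals
`2ε/√5 < 0.895 ε`. For the second term, `eˣ - 1 ≤ x/(1 - x)` gives
`k ε₀ (e^{ε₀} - 1) ≤ k ε₀² / (1 - ε₀) = 2ε² / (5 log(1/δ) (1 - ε₀))`, and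
`log(1/δ) ≥ log 8 > 2.07`, `ε₀ ≤ 0.07`, `ε ≤ 1/2` bound this by `0.105 ε`.
-/

open Real

lemma exp_sub_one_le_div_one_sub {x : ℝ} (hx0 : 0 ≤ x) (hx1 : x < 1) :
    exp x - 1 ≤ x / (1 - x) := by
  have h1x : 1 - x ≠ 0 := by linarith
  calc exp x - 1 ≤ 1 / (1 - x) - 1 := by linarith [exp_bound_div_one_sub_of_interval hx0 hx1]
    _ = x / (1 - x) := by field_simp; ring

lemma le_log_one_div_of_le_one_tenth {δ : ℝ} (hδ0 : 0 < δ) (hδ : δ ≤ 0.1) :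
    (2.07 : ℝ) ≤ log (1 / δ) := by
  have h8 : (8 : ℝ) ≤ 1 / δ := by rw [le_div_iff₀ hδ0]; linarith
  have hlog8 : log 8 = 3 * log 2 := by
    rw [show (8 : ℝ) = 2 ^ 3 by norm_num, log_pow]; norm_num
  linarith [log_le_log (by norm_num) h8, log_two_gt_d9]

lemma div_sqrt_ten_mul_mul_sqrt_two_mul (c : ℝ) {a : ℝ} (ha : 0 < a) :
    c / √(10 * a) * √(2 * a) = c / √5 := by
  have h2a : 0 < √(2 * a) := sqrt_pos.2 (by positivity)
  rw [show 10 * a = 5 * (2 * a) by ring, sqrt_mul (by norm_num)]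
  field_simp

lemma two_div_sqrt_five_lt : 2 / √5 < 0.895 := by
  rw [div_lt_iff₀ (by positivity)]
  nlinarith [sq_sqrt (by norm_num : (0 : ℝ) ≤ 5), sqrt_nonneg 5]

/-- **Analytic core of Theorem 2.7**: for `0 < ε ≤ 0.5`, `0 < δ ≤ 0.1`, `k ≥ 10` and
`ε₀ = 2ε/√(10·k·log(1/δ))`, one has `ε₀·√(2·k·log(1/δ)) + k·ε₀·(e^{ε₀} − 1) ≤ ε`. -/
theorem advanced_composition_budget
    (ε δ : ℝ) (hε0 : 0 < ε) (hε : ε ≤ 0.5) (hδ0 : 0 < δ) (hδ : δ ≤ 0.1)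
    (k : ℕ) (hk : 10 ≤ k) :
    (2 * ε / Real.sqrt (10 * k * Real.log (1 / δ))) *
        Real.sqrt (2 * k * Real.log (1 / δ))
      + k * (2 * ε / Real.sqrt (10 * k * Real.log (1 / δ))) *
          (Real.exp (2 * ε / Real.sqrt (10 * k * Real.log (1 / δ))) - 1)
      ≤ ε := by
  have hk' : (10 : ℝ) ≤ k := by exact_mod_cast hk
  set L := log (1 / δ)
  have hL : 2.07 ≤ L := le_log_one_div_of_le_one_tenth hδ0 hδ
  have hkL : 0 < k * L := by positivity
  set ε₀ := 2 * ε / √(10 * k * L) with hε₀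
  have hε₀_pos : 0 < ε₀ := by positivity
  have hε₀_sq : k * ε₀ ^ 2 = 2 * ε ^ 2 / (5 * L) := by
    rw [hε₀, div_pow, sq_sqrt (by positivity)]
    field_simp
    ring
  have hε₀_small : ε₀ ≤ 0.07 := by
    have h : ε₀ ^ 2 ≤ 0.07 ^ 2 := by
      rw [← mul_le_mul_iff_of_pos_left (by positivity : (0 : ℝ) < k), hε₀_sq,
        div_le_iff₀ (by positivity)]
      nlinarith
    exact (pow_le_pow_iff_left₀ hε₀_pos.le (by norm_num) two_ne_zero).1 h
  have first : ε₀ * √(2 * k * L) ≤ 0.895 * ε := by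
    rw [hε₀, mul_assoc 10, mul_assoc 2, div_sqrt_ten_mul_mul_sqrt_two_mul _ hkL,
      mul_div_right_comm]
    nlinarith [two_div_sqrt_five_lt]
  have second : k * ε₀ * (exp ε₀ - 1) ≤ 0.105 * ε :=
    calc k * ε₀ * (exp ε₀ - 1) ≤ k * ε₀ * (ε₀ / (1 - ε₀)) := by
          gcongr
          exact exp_sub_one_le_div_one_sub hε₀_pos.le (by linarith)
      _ = 2 * ε ^ 2 / (5 * L * (1 - ε₀)) := by
          rw [← mul_div_assoc, mul_assoc, ← sq, hε₀_sq, div_div]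
      _ ≤ 0.105 * ε := by
          rw [div_le_iff₀ (by nlinarith)]
          nlinarith [mul_nonneg (sub_nonneg.2 hL) (sub_nonneg.2 hε₀_small)]
  linarith
end

section
/- For every constant a > 0 there exist a constant K > 0 and an integer n₀ such that for all n ≥ n₀ and every integer t with n/2 ≤ t ≤ n satisfying Σ_{i=t}^{n} C(n,i) ≥ 2ⁿ · n^{−a}, one has C(n, t−1) / Σ_{i=t}^{n} C(n,i) ≤ K·√((log n)/n), where C(n,i) denotes the binomial coefficient n choose i. -/
/-!
By the Chernoff bound `∑_{i ≥ t} C(n,i) ≤ 2ⁿ exp(-(2t-n)²/(2n))`, a tail of size at least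
`2ⁿ n^{-a}` forces `2t - n ≤ √(2a n log n)`. On the `L ≍ √(n / log n)` indices following
`t - 1` the ratios `C(n,i+1)/C(n,i) = (n-i)/(i+1)` are then `1 - O(√(log n / n))`, so each of
these `L` terms of the tail is at least `C(n,t-1)/2`.
-/

open Real Finset

theorem cast_choose_succ_mul (n k : ℕ) :
    (n.choose (k + 1) : ℝ) * (k + 1) = n.choose k * ((n : ℝ) - k) := by
  rcases le_or_gt k n with hk | hk
  · have h := congrArg (Nat.cast (R := ℝ)) (Nat.choose_succ_right_eq n k)
    push_cast [Nat.cast_sub hk] at h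
    exact h
  · simp [Nat.choose_eq_zero_of_lt hk, Nat.choose_eq_zero_of_lt (Nat.lt_succ_of_lt hk)]

-- `(n - i) / (i + 1)` decreases in `i`, so the ratio bound is only needed at the last step.
theorem pow_mul_choose_le_choose_add {n j : ℕ} {q : ℝ} (hq : 0 ≤ q) :
    ∀ k : ℕ, q * (j + k) ≤ n + 1 - (j + k) → q ^ k * n.choose j ≤ n.choose (j + k)
  | 0, _ => by simp
  | k + 1, h => by
    push_cast at h
    have hk : q * (j + k) ≤ n + 1 - (j + k) := by nlinarith
    have hpos : (0 : ℝ) < j + k + 1 := by positivity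
    have step : q * n.choose (j + k) ≤ n.choose (j + k + 1) := by
      rw [← mul_le_mul_iff_left₀ hpos]
      have := cast_choose_succ_mul n (j + k)
      push_cast at this
      rw [this]
      have : (0 : ℝ) ≤ n.choose (j + k) := by positivity
      nlinarith
    calc q ^ (k + 1) * n.choose j = q * (q ^ k * n.choose j) := by ring
      _ ≤ q * n.choose (j + k) := by gcongr; exact pow_mul_choose_le_choose_add hq k hk
      _ ≤ n.choose (j + (k + 1)) := step

theorem mul_pow_mul_choose_le_sum_Icc {n s L : ℕ} {q : ℝ} (hq₀ : 0 ≤ q) (hq₁ : q ≤ 1)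
    (hsL : s + L ≤ n) (h : q * (s + L) ≤ n + 1 - (s + L)) :
    L * q ^ L * n.choose s ≤ ∑ i ∈ Icc (s + 1) n, (n.choose i : ℝ) := by
  calc L * q ^ L * n.choose s = ∑ _i ∈ Icc (s + 1) (s + L), q ^ L * (n.choose s : ℝ) := by
        rw [sum_const, Nat.card_Icc, nsmul_eq_mul, show s + L + 1 - (s + 1) = L by omega]; ring
    _ ≤ ∑ i ∈ Icc (s + 1) (s + L), (n.choose i : ℝ) := by
        refine sum_le_sum fun i hi => ?_
        obtain ⟨k, rfl⟩ : ∃ k, i = s + k := ⟨i - s, by grind⟩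
        have hkL : k ≤ L := by grind
        have hk : q * (s + k) ≤ n + 1 - (s + k) := by
          have : (k : ℝ) ≤ L := by exact_mod_cast hkL
          nlinarith
        calc q ^ L * (n.choose s : ℝ) ≤ q ^ k * n.choose s := by
              gcongr ?_ * _; exact pow_le_pow_of_le_one hq₀ hq₁ hkL
          _ ≤ n.choose (s + k) := pow_mul_choose_le_choose_add hq₀ k hk
    _ ≤ ∑ i ∈ Icc (s + 1) n, (n.choose i : ℝ) :=
        sum_le_sum_of_subset_of_nonneg (Icc_subset_Icc_right hsL) fun _ _ _ => by positivity

theorem choose_pred_div_sum_Icc_le {n t L : ℕ} (ht : n ≤ 2 * t) (hL : 1 ≤ L)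
    (h : 4 * L * ((2 * t - n : ℝ) + 2 * L) ≤ n) :
    (n.choose (t - 1) : ℝ) / ∑ i ∈ Icc t n, (n.choose i : ℝ) ≤ 2 / L := by
  set d : ℝ := 2 * t - n
  have hd : 0 ≤ d := by simp only [d, sub_nonneg]; exact_mod_cast ht
  have hL' : (1 : ℝ) ≤ L := by exact_mod_cast hL
  have hwindow : d + 2 * L ≤ n / 4 := by nlinarith
  have hn : (0 : ℝ) < n := by linarith
  have ht₁ : 1 ≤ t := by
    have : (0 : ℝ) < t := by linarith
    exact_mod_cast this
  -- Every ratio `C(n,i+1)/C(n,i)` with `t - 1 ≤ i < t - 1 + L` is at least `1 - ε`, and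
  -- `(1 - ε)^L ≥ 1 - Lε ≥ 1/2` by Bernoulli.
  set ε : ℝ := 2 * (d + 2 * L) / n
  have hLε : L * ε ≤ 1 / 2 := by
    simp only [ε]; rw [mul_div_assoc', div_le_iff₀ hn]; linarith
  have hε : 0 ≤ ε := by positivity
  have htL : t - 1 + L ≤ n := by
    have : (t : ℝ) + L ≤ n + 1 := by linarith
    have : t + L ≤ n + 1 := by exact_mod_cast this
    omega
  have hcast : ((t - 1 : ℕ) : ℝ) = t - 1 := by push_cast [Nat.cast_sub ht₁]; ring
  have hratio : (1 - ε) * ((t - 1 : ℕ) + L) ≤ n + 1 - ((t - 1 : ℕ) + L) := by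
    rw [hcast]
    have : ε * n / 2 = d + 2 * L := by simp only [ε]; field_simp
    nlinarith
  have hwin := mul_pow_mul_choose_le_sum_Icc (by nlinarith) (by linarith) htL hratio
  rw [Nat.sub_add_cancel ht₁] at hwin
  have hpow : 1 / 2 ≤ (1 - ε) ^ L := by
    have := one_add_mul_sub_le_pow (a := 1 - ε) (by nlinarith) L
    linarith
  have hS : 0 < ∑ i ∈ Icc t n, (n.choose i : ℝ) :=
    sum_pos (fun i hi => Nat.cast_pos.2 (Nat.choose_pos (mem_Icc.1 hi).2)) ⟨t, by simp; omega⟩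
  rw [div_le_div_iff₀ hS (by positivity)]
  have : (0 : ℝ) ≤ n.choose (t - 1) := by positivity
  nlinarith

theorem pow_mul_sum_Icc_choose_le {n t : ℕ} {r : ℝ} (hr : 1 ≤ r) :
    r ^ t * ∑ i ∈ Icc t n, (n.choose i : ℝ) ≤ (1 + r) ^ n := by
  calc r ^ t * ∑ i ∈ Icc t n, (n.choose i : ℝ)
        ≤ ∑ i ∈ Icc t n, r ^ i * (n.choose i : ℝ) := by
        rw [mul_sum]
        exact sum_le_sum fun i hi => by gcongr; exact (mem_Icc.1 hi).1
    _ ≤ ∑ i ∈ range (n + 1), r ^ i * (n.choose i : ℝ) :=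
        sum_le_sum_of_subset_of_nonneg (fun i hi => by simp at hi ⊢; omega)
          fun _ _ _ => by positivity
    _ = (1 + r) ^ n := by rw [add_comm 1 r, add_pow]; simp

theorem one_add_exp_le (x : ℝ) : 1 + exp x ≤ 2 * exp (x / 2 + x ^ 2 / 8) :=
  calc 1 + exp x = 2 * exp (x / 2) * cosh (x / 2) := by
        have hsq : exp x = exp (x / 2) * exp (x / 2) := by rw [← exp_add]; ring_nf
        have hinv : exp (x / 2) * exp (-(x / 2)) = 1 := by rw [← exp_add]; simp
        rw [cosh_eq]; linear_combination hsq - hinv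
    _ ≤ 2 * exp (x / 2) * exp ((x / 2) ^ 2 / 2) := by gcongr; exact cosh_le_exp_half_sq _
    _ = 2 * exp (x / 2 + x ^ 2 / 8) := by rw [mul_assoc, ← exp_add]; ring_nf

theorem sum_Icc_choose_le_two_pow_mul_exp {n t : ℕ} (ht : n ≤ 2 * t) :
    ∑ i ∈ Icc t n, (n.choose i : ℝ) ≤ 2 ^ n * exp (-(2 * t - n : ℝ) ^ 2 / (2 * n)) := by
  set d : ℝ := 2 * t - n
  set x : ℝ := 2 * d / n
  have hx : 0 ≤ x := by
    have : (n : ℝ) ≤ 2 * t := by exact_mod_cast ht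
    simp only [x, d]; positivity
  have hexponent : n * (x / 2 + x ^ 2 / 8) - x * t = -d ^ 2 / (2 * n) := by
    rcases Nat.eq_zero_or_pos n with rfl | hn
    · simp [x]
    · simp only [x, d]; field_simp; ring
  have hchernoff := (pow_mul_sum_Icc_choose_le (n := n) (t := t) (one_le_exp hx)).trans
    ((pow_le_pow_left₀ (by positivity) (one_add_exp_le x) n))
  rw [← exp_nat_mul, mul_pow, ← exp_nat_mul, ← le_div_iff₀' (by positivity), mul_div_assoc,
    ← exp_sub, mul_comm (t : ℝ) x, hexponent] at hchernoff
  exact hchernoff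

theorem sq_le_of_two_pow_mul_rpow_neg_le_sum_Icc {n t : ℕ} {a : ℝ} (hn : 0 < n)
    (ht : n ≤ 2 * t) (h : 2 ^ n * (n : ℝ) ^ (-a) ≤ ∑ i ∈ Icc t n, (n.choose i : ℝ)) :
    (2 * t - n : ℝ) ^ 2 ≤ 2 * a * (n * log n) := by
  have hn' : (0 : ℝ) < n := by exact_mod_cast hn
  have := (h.trans (sum_Icc_choose_le_two_pow_mul_exp ht))
  rw [mul_le_mul_iff_right₀ (by positivity), rpow_def_of_pos hn', exp_le_exp,
    le_div_iff₀ (by positivity)] at this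
  nlinarith

theorem choose_pred_div_sum_Icc_le_of_sub_le {n t : ℕ} {c β : ℝ} (hc : 0 ≤ c) (hβ : 0 < β)
    (hβc : β * (c + 1) ≤ 1 / 8) (hlog : 1 ≤ log n) (hlogβ : log n ≤ β ^ 2 * n)
    (ht : n ≤ 2 * t) (hd : (2 * t - n : ℝ) ≤ c * √(n * log n)) :
    (n.choose (t - 1) : ℝ) / ∑ i ∈ Icc t n, (n.choose i : ℝ) ≤
      4 / β * √(log n / n) := by
  have hn : (0 : ℝ) < n := Nat.cast_pos.2 (Nat.pos_of_ne_zero (by rintro rfl; norm_num at hlog))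
  set x := √(n / log n)
  have hx₀ : 0 < x := sqrt_pos.2 (by positivity)
  have hxsq : x ^ 2 = n / log n := sq_sqrt (by positivity)
  have hxn : x * √(n * log n) = n := by
    rw [← sqrt_mul (by positivity), show n / log n * (n * log n) = (n : ℝ) * n by field_simp,
      sqrt_mul_self hn.le]
  have hxinv : x⁻¹ = √(log n / n) := by rw [← sqrt_inv, inv_div]
  have hβx : 1 ≤ β * x := by
    rw [← sqrt_sq hβ.le, ← sqrt_mul (by positivity), one_le_sqrt, ← mul_div_assoc,
      le_div_iff₀ (by positivity)]
    linarith
  set L := ⌊β * x⌋₊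
  have hL₁ : 1 ≤ L := Nat.le_floor (by simpa using hβx)
  have hLx : (L : ℝ) ≤ β * x := Nat.floor_le (by positivity)
  have hxL : β * x ≤ 2 * L := by
    have := Nat.lt_floor_add_one (β * x)
    have : (1 : ℝ) ≤ L := by exact_mod_cast hL₁
    linarith
  have hwindow : 4 * L * ((2 * t - n : ℝ) + 2 * L) ≤ n := by
    have hdL : (L : ℝ) * (2 * t - n) ≤ β * c * n := by
      calc (L : ℝ) * (2 * t - n) ≤ β * x * (c * √(n * log n)) :=
            mul_le_mul hLx hd (by simp only [sub_nonneg]; exact_mod_cast ht) (by positivity)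
          _ = β * c * (x * √(n * log n)) := by ring
          _ = β * c * n := by rw [hxn]
    have hLL : (L : ℝ) * L ≤ β ^ 2 * n := by
      calc (L : ℝ) * L ≤ (β * x) * (β * x) := by gcongr
        _ = β ^ 2 * (n / log n) := by rw [← hxsq]; ring
        _ ≤ β ^ 2 * n := by gcongr; exact div_le_self hn.le hlog
    have hβc' : 4 * β * c + 8 * β ^ 2 ≤ 1 := by nlinarith
    nlinarith
  calc (n.choose (t - 1) : ℝ) / ∑ i ∈ Icc t n, (n.choose i : ℝ) ≤ 2 / L :=
        choose_pred_div_sum_Icc_le ht hL₁ hwindow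
    _ ≤ 4 / (β * x) := by
        rw [div_le_div_iff₀ (by positivity) (by positivity)]; linarith
    _ = 4 / β * √(log n / n) := by rw [← hxinv]; field_simp

theorem eventually_one_le_log_and_log_le_mul {ε : ℝ} (hε : 0 < ε) :
    ∀ᶠ n : ℕ in Filter.atTop, 1 ≤ log n ∧ log n ≤ ε * n := by
  have h₁ := (tendsto_log_atTop.comp tendsto_natCast_atTop_atTop).eventually_ge_atTop 1
  have h₂ := tendsto_natCast_atTop_atTop.eventually (isLittleO_log_id_atTop.bound hε)
  filter_upwards [h₁, h₂] with n h₁ h₂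
  exact ⟨h₁, (le_abs_self _).trans (by simpa using h₂)⟩

theorem binomial_tail_ratio_bound_general (a : ℝ) :
    ∃ K : ℝ, 0 < K ∧ ∃ n₀ : ℕ, ∀ n : ℕ, n₀ ≤ n → ∀ t : ℕ,
      (n : ℝ) / 2 ≤ (t : ℝ) → t ≤ n →
      (2 : ℝ) ^ n * (n : ℝ) ^ (-a) ≤ ∑ i ∈ Finset.Icc t n, (n.choose i : ℝ) →
      (n.choose (t - 1) : ℝ) / ∑ i ∈ Finset.Icc t n, (n.choose i : ℝ)
        ≤ K * Real.sqrt (Real.log n / n) := by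
  set c := √(2 * a)
  set β := 1 / (8 * (c + 1))
  have hβ : 0 < β := by positivity
  obtain ⟨n₀, hn₀⟩ :=
    Filter.eventually_atTop.1 (eventually_one_le_log_and_log_le_mul (pow_pos hβ 2))
  refine ⟨4 / β, by positivity, n₀, fun n hnn₀ t hhalf _ hS => ?_⟩
  obtain ⟨hlog, hlogβ⟩ := hn₀ n hnn₀
  have hn : 0 < n := Nat.pos_of_ne_zero (by rintro rfl; norm_num at hlog)
  have ht : n ≤ 2 * t := by exact_mod_cast (by linarith : (n : ℝ) ≤ 2 * t)
  have hd : (2 * t - n : ℝ) ≤ c * √(n * log n) := by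
    rw [← sqrt_mul' _ (by positivity)]
    exact (le_abs_self _).trans (abs_le_sqrt (sq_le_of_two_pow_mul_rpow_neg_le_sum_Icc hn ht hS))
  have hβc : β * (c + 1) = 1 / 8 := by
    have : 0 < c + 1 := by positivity
    simp only [β]; field_simp
  exact choose_pred_div_sum_Icc_le_of_sub_le (sqrt_nonneg _) hβ hβc.le hlog hlogβ ht hd

/-- **Quantitative claim of Example 2.1** (multiplicative sensitivity of the binomial test
p-value): for every `a > 0` there are `K > 0` and `n₀` such that for all `n ≥ n₀` and
`n/2 ≤ t ≤ n` with `Σ_{i=t}^n C(n,i) ≥ 2ⁿ·n^{−a}`, one has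
`C(n,t−1)/Σ_{i=t}^n C(n,i) ≤ K·√((log n)/n)`. -/
theorem binomial_tail_ratio_bound (a : ℝ) (ha : 0 < a) :
    ∃ K : ℝ, 0 < K ∧ ∃ n₀ : ℕ, ∀ n : ℕ, n₀ ≤ n → ∀ t : ℕ,
      (n : ℝ) / 2 ≤ (t : ℝ) → t ≤ n →
      (2 : ℝ) ^ n * (n : ℝ) ^ (-a) ≤ ∑ i ∈ Finset.Icc t n, (n.choose i : ℝ) →
      (n.choose (t - 1) : ℝ) / ∑ i ∈ Finset.Icc t n, (n.choose i : ℝ)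
        ≤ K * Real.sqrt (Real.log n / n) :=
  binomial_tail_ratio_bound_general a
end
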